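/- Let φ be a flat ADT formula in negation normal form with size constraints over a well-defined ADT, let φ₀, φ₁, … be an unfolding sequence for φ, and let Uᵢ be the set of variables unfolded in φᵢ (U₀ = ∅, and Uᵢ = Uᵢ₋₁ ∪ {x} if φᵢ was derived by unfolding x). If the reduct φ̃ᵢ is satisfied over EUF+LIA by a model M̃ and assignment β̃ such that for every ADT variable x : σ of φᵢ there is a variable y ∈ Uᵢ with y : σ and val_{M̃,β̃}(x̃) = val_{M̃,β̃}(ỹ), then φ is satisfiable over the ADT with size. -/

import Mathlib

/-!
Reduction of ADT constraints **with size constraints** to EUF+LIA: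
soundness for unsatisfiability (Lemma 1 of the paper).
-/

structure ADTSig where
  numSorts : ℕ
  numCtors : ℕ
  ctorArgs : Fin numCtors → List (Fin numSorts)
  ctorRes : Fin numCtors → Fin numSorts

namespace ADTSig

inductive Term (S : ADTSig) : Fin S.numSorts → Type where
  | mk (f : Fin S.numCtors)
      (args : (i : Fin (S.ctorArgs f).length) → Term S ((S.ctorArgs f).get i)) :
      Term S (S.ctorRes f)

/-- The size `|t|` of a constructor term: the number of constructor
occurrences. -/
def Term.size {S : ADTSig} : {σ : Fin S.numSorts} → Term S σ → ℕ
  | _, .mk _ args => 1 + ∑ i, (args i).size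

def Term.head {S : ADTSig} : {σ : Fin S.numSorts} → Term S σ → Fin S.numCtors
  | _, .mk f _ => f

def WellDefined (S : ADTSig) : Prop := ∀ σ, Nonempty (S.Term σ)

structure SelInterp (S : ADTSig) where
  sel : (f : Fin S.numCtors) → (i : Fin (S.ctorArgs f).length) →
    S.Term (S.ctorRes f) → S.Term ((S.ctorArgs f).get i)
  sel_mk : ∀ f i args, sel f i (Term.mk f args) = args i

/-! ### Presburger formulas (for the size constraints) -/

inductive PTerm (n : ℕ) where
  | cst (c : ℤ)
  | var (i : Fin n)
  | add (s t : PTerm n)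
  | smul (c : ℤ) (t : PTerm n)

def PTerm.eval {n : ℕ} (ρ : Fin n → ℤ) : PTerm n → ℤ
  | .cst c => c
  | .var i => ρ i
  | .add s t => s.eval ρ + t.eval ρ
  | .smul c t => c * t.eval ρ

inductive PForm : ℕ → Type where
  | le {n} (s t : PTerm n) : PForm n
  | peq {n} (s t : PTerm n) : PForm n
  | not {n} (φ : PForm n) : PForm n
  | and {n} (φ ψ : PForm n) : PForm n
  | or {n} (φ ψ : PForm n) : PForm n
  | ex {n} (φ : PForm (n + 1)) : PForm n

def PForm.eval : {n : ℕ} → (Fin n → ℤ) → PForm n → Prop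
  | _, ρ, .le s t => s.eval ρ ≤ t.eval ρ
  | _, ρ, .peq s t => s.eval ρ = t.eval ρ
  | _, ρ, .not φ => ¬ φ.eval ρ
  | _, ρ, .and φ ψ => φ.eval ρ ∧ ψ.eval ρ
  | _, ρ, .or φ ψ => φ.eval ρ ∨ ψ.eval ρ
  | _, ρ, .ex φ => ∃ z : ℤ, φ.eval (Fin.cons z ρ)

/-! ### Flat formulas with size constraints -/

/-- Literals of flat ADT formulas with size constraints: as in the size-free
case, plus Presburger constraints `φ_Pres(|x₁|,…,|x_n|)` on the sizes of
(the terms assigned to) variables. -/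
inductive Lit (S : ADTSig) (V : Fin S.numSorts → Type) where
  | ctorEq (f : Fin S.numCtors)
      (xs : (i : Fin (S.ctorArgs f).length) → V ((S.ctorArgs f).get i))
      (x0 : V (S.ctorRes f))
  | selEq (f : Fin S.numCtors) (j : Fin (S.ctorArgs f).length)
      (x : V (S.ctorRes f)) (y : V ((S.ctorArgs f).get j))
  | tst (f : Fin S.numCtors) (x : V (S.ctorRes f))
  | ntst (f : Fin S.numCtors) (x : V (S.ctorRes f))
  | eqv {σ : Fin S.numSorts} (x y : V σ)
  | nev {σ : Fin S.numSorts} (x y : V σ)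
  | sizeC {n : ℕ} (xs : Fin n → Σ σ, V σ) (P : PForm n)

inductive Formula (S : ADTSig) (V : Fin S.numSorts → Type) where
  | fls
  | lit (l : Lit S V)
  | and (φ ψ : Formula S V)
  | or (φ ψ : Formula S V)

variable {S : ADTSig} {V : Fin S.numSorts → Type}

def Lit.holds (I : SelInterp S) (β : (σ : Fin S.numSorts) → V σ → S.Term σ) :
    Lit S V → Prop
  | .ctorEq f xs x0 => Term.mk f (fun i => β _ (xs i)) = β _ x0
  | .selEq f j x y => I.sel f j (β _ x) = β _ y
  | .tst f x => (β _ x).head = f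
  | .ntst f x => (β _ x).head ≠ f
  | .eqv x y => β _ x = β _ y
  | .nev x y => β _ x ≠ β _ y
  | .sizeC xs P => P.eval (fun i => ((β (xs i).1 (xs i).2).size : ℤ))

def Formula.holds (I : SelInterp S) (β : (σ : Fin S.numSorts) → V σ → S.Term σ) :
    Formula S V → Prop
  | .fls => False
  | .lit l => l.holds I β
  | .and φ ψ => φ.holds I β ∧ ψ.holds I β
  | .or φ ψ => φ.holds I β ∨ ψ.holds I β

def Formula.ADTSat (φ : Formula S V) : Prop :=
  ∃ (I : SelInterp S) (β : (σ : Fin S.numSorts) → V σ → S.Term σ), φ.holds I β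

/-! ### The EUF+LIA side, with size functions -/

/-- An EUF+LIA model for the vocabulary of the reduction with size: `size_σ`
replaces `depth_σ`. -/
structure RModel (S : ADTSig) where
  ctorF : (f : Fin S.numCtors) → (Fin (S.ctorArgs f).length → ℤ) → ℤ
  selF : (f : Fin S.numCtors) → Fin (S.ctorArgs f).length → ℤ → ℤ
  ctorIdF : Fin S.numSorts → ℤ → ℤ
  sizeF : Fin S.numSorts → ℤ → ℤ

def ctorIndex (S : ADTSig) (f : Fin S.numCtors) : ℤ :=
  ((Finset.univ.filter
      (fun g : Fin S.numCtors => g ≤ f ∧ S.ctorRes g = S.ctorRes f)).card : ℤ)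

def InSort (S : ADTSig) (σ : Fin S.numSorts) (x : ℤ) : Prop :=
  Finite (S.Term σ) → (0 ≤ x ∧ x < (Nat.card (S.Term σ) : ℤ))

/-- The size image `𝕊_σ` of a sort, as a set of integers. -/
def SizeImageZ (S : ADTSig) (σ : Fin S.numSorts) : Set ℤ :=
  {z | ∃ t : S.Term σ, (t.size : ℤ) = z}

/-- `CtorSpec′_f(x₀,…,x_n)` of Table II. -/
def CtorSpec' (M : RModel S) (f : Fin S.numCtors) (x0 : ℤ)
    (xs : Fin (S.ctorArgs f).length → ℤ) : Prop :=
  M.ctorF f xs = x0 ∧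
  M.ctorIdF (S.ctorRes f) x0 = ctorIndex S f ∧
  (∀ j, M.selF f j x0 = xs j ∧
     M.sizeF ((S.ctorArgs f).get j) (xs j) ∈ SizeImageZ S ((S.ctorArgs f).get j)) ∧
  M.sizeF (S.ctorRes f) x0 = 1 + ∑ j, M.sizeF ((S.ctorArgs f).get j) (xs j)

def ExCtorSpec' (M : RModel S) (f : Fin S.numCtors) (x : ℤ) : Prop :=
  ∃ xs : Fin (S.ctorArgs f).length → ℤ,
    (∀ j, InSort S ((S.ctorArgs f).get j) (xs j)) ∧ CtorSpec' M f x xs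

/-- The reduct of a literal: rules (1)–(6) with `CtorSpec′`, and rule (7) for
size literals (`|x| ≈ y` becomes `size_σ(x̃) ≈ y ∧ y ∈ 𝕊_σ`). -/
def Lit.redHolds (M : RModel S) (β : (σ : Fin S.numSorts) → V σ → ℤ) :
    Lit S V → Prop
  | .ctorEq f xs x0 => CtorSpec' M f (β _ x0) (fun i => β _ (xs i))
  | .selEq f j x y => M.selF f j (β _ x) = β _ y ∧
      ∃ g, S.ctorRes g = S.ctorRes f ∧ ExCtorSpec' M g (β _ x)
  | .tst f x => ExCtorSpec' M f (β _ x)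
  | .ntst f x => ∃ g, S.ctorRes g = S.ctorRes f ∧ g ≠ f ∧ ExCtorSpec' M g (β _ x)
  | .eqv x y => β _ x = β _ y
  | .nev x y => β _ x ≠ β _ y
  | .sizeC xs P =>
      P.eval (fun i => M.sizeF (xs i).1 (β (xs i).1 (xs i).2)) ∧
      ∀ i, M.sizeF (xs i).1 (β (xs i).1 (xs i).2) ∈ SizeImageZ S (xs i).1

def Formula.redHolds (M : RModel S) (β : (σ : Fin S.numSorts) → V σ → ℤ) :
    Formula S V → Prop
  | .fls => False
  | .lit l => l.redHolds M β
  | .and φ ψ => φ.redHolds M β ∧ ψ.redHolds M β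
  | .or φ ψ => φ.redHolds M β ∨ ψ.redHolds M β

def Formula.RedSat (φ : Formula S V) : Prop :=
  ∃ (M : RModel S) (β : (σ : Fin S.numSorts) → V σ → ℤ),
    φ.redHolds M β ∧ ∀ σ (x : V σ), InSort S σ (β σ x)


/-! ### Variables and unfolding -/

/-- The list of (sorted) variables occurring in a literal. -/
def Lit.varList : Lit S V → List (Σ σ, V σ)
  | .ctorEq _ xs x0 => ⟨_, x0⟩ :: List.ofFn (fun i => ⟨_, xs i⟩)
  | .selEq _ _ x y => [⟨_, x⟩, ⟨_, y⟩]
  | .tst _ x => [⟨_, x⟩]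
  | .ntst _ x => [⟨_, x⟩]
  | .eqv x y => [⟨_, x⟩, ⟨_, y⟩]
  | .nev x y => [⟨_, x⟩, ⟨_, y⟩]
  | .sizeC xs _ => List.ofFn xs

/-- The list of (sorted) variables occurring in a formula. -/
def Formula.varList : Formula S V → List (Σ σ, V σ)
  | .fls => []
  | .lit l => l.varList
  | .and φ ψ => φ.varList ++ ψ.varList
  | .or φ ψ => φ.varList ++ ψ.varList

/-- The disjunction `⋁_{f_j : σ} f_j(x₁ʲ, x₂ʲ, …) ≈ x` over all constructors
of sort `σ`, with argument variables `fresh`. -/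
def unfoldDisj (σ : Fin S.numSorts) (x : V σ)
    (fresh : (f : Fin S.numCtors) → (i : Fin (S.ctorArgs f).length) →
       V ((S.ctorArgs f).get i)) : Formula S V :=
  ((List.finRange S.numCtors).map (fun f =>
      if h : S.ctorRes f = σ then
        Formula.lit (Lit.ctorEq f (fresh f) (cast (congrArg V h.symm) x))
      else Formula.fls)).foldr Formula.or Formula.fls

/-- `φ'` is obtained from `φ` by unfolding the variable `u` (which occurs in
`φ`), using pairwise distinct fresh argument variables. -/
def IsUnfoldStepAt (φ φ' : Formula S V) (u : Σ σ, V σ) : Prop :=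
  ∃ fresh : (f : Fin S.numCtors) → (i : Fin (S.ctorArgs f).length) →
      V ((S.ctorArgs f).get i),
    u ∈ φ.varList ∧
    (∀ f i, (⟨_, fresh f i⟩ : Σ σ, V σ) ∉ φ.varList) ∧
    (∀ f i f' i', (⟨_, fresh f i⟩ : Σ σ, V σ) = ⟨_, fresh f' i'⟩ →
       (⟨f, i⟩ : Σ f : Fin S.numCtors, Fin (S.ctorArgs f).length) = ⟨f', i'⟩) ∧
    φ' = φ.and (unfoldDisj u.1 u.2 fresh)


end ADTSig

/-!
Every unfolded variable `u` has a disjunct of its unfolding true in the reduct, so its value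
satisfies `CtorSpec′` for some constructor, with argument values carried by fresh variables of
`φᵢ`, hence again values of unfolded variables. Since `CtorSpec′` makes argument sizes strictly
smaller, recursion on `size_σ` turns each such value into a constructor term it denotes, and this
term is unique because `ctorId` separates the constructors of a sort. Assigning to every variable
the term denoted by its value, and interpreting a selector on a term with a different head through
the model's selector function, satisfies every literal of `φ = φ₀`, whose variables occur in `φᵢ`.
-/

namespace ADTSig

variable {S : ADTSig}

theorem ctorIndex_strictMonoOn (σ : Fin S.numSorts) :
    StrictMonoOn (ctorIndex S) {f | S.ctorRes f = σ} := by
  intro f hf g hg hfg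
  unfold ctorIndex
  refine Nat.cast_lt.2 (Finset.card_lt_card ⟨fun h hh => ?_, fun hsub => ?_⟩)
  · simp only [Finset.mem_filter, Finset.mem_univ, true_and] at hh ⊢
    exact ⟨hh.1.trans hfg.le, hh.2.trans (hf.trans hg.symm)⟩
  · have := hsub (Finset.mem_filter.2 ⟨Finset.mem_univ g, le_rfl, rfl⟩)
    exact absurd (Finset.mem_filter.1 this).2.1 (not_le.2 hfg)

section CtorSpec

variable {M : RModel S} {f g : Fin S.numCtors} {v : ℤ}

theorem CtorSpec'.ctor_eq {c : Fin (S.ctorArgs f).length → ℤ}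
    {d : Fin (S.ctorArgs g).length → ℤ} (hres : S.ctorRes f = S.ctorRes g)
    (hc : CtorSpec' M f v c) (hd : CtorSpec' M g v d) : f = g :=
  (ctorIndex_strictMonoOn (S.ctorRes g)).injOn hres rfl <| by
    rw [← hc.2.1, ← hd.2.1, hres]

theorem CtorSpec'.args_eq {c d : Fin (S.ctorArgs f).length → ℤ}
    (hc : CtorSpec' M f v c) (hd : CtorSpec' M f v d) : c = d :=
  funext fun j => (hc.2.2.1 j).1.symm.trans (hd.2.2.1 j).1

theorem CtorSpec'.toNat_sizeF_arg_lt {c : Fin (S.ctorArgs f).length → ℤ}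
    (hc : CtorSpec' M f v c) (k : Fin (S.ctorArgs f).length) :
    (M.sizeF ((S.ctorArgs f).get k) (c k)).toNat < (M.sizeF (S.ctorRes f) v).toNat := by
  have hpos : ∀ j, 0 ≤ M.sizeF _ (c j) := fun j => by
    obtain ⟨t, ht⟩ := (hc.2.2.1 j).2
    exact ht ▸ Int.natCast_nonneg _
  have := Finset.single_le_sum (fun j _ => hpos j) (Finset.mem_univ k)
  have := hpos k
  have := hc.2.2.2
  omega

end CtorSpec

def Term.interp (M : RModel S) : {σ : Fin S.numSorts} → S.Term σ → ℤ
  | _, .mk f args => M.ctorF f fun k => (args k).interp M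

inductive Denotes (M : RModel S) : (σ : Fin S.numSorts) → ℤ → S.Term σ → Prop
  | mk {f : Fin S.numCtors} {v : ℤ} {c : Fin (S.ctorArgs f).length → ℤ}
      {args : (k : Fin (S.ctorArgs f).length) → S.Term ((S.ctorArgs f).get k)} :
      CtorSpec' M f v c → (∀ k, Denotes M _ (c k) (args k)) →
      Denotes M (S.ctorRes f) v (.mk f args)

namespace Denotes

variable {M : RModel S} {σ : Fin S.numSorts} {v : ℤ} {t t' : S.Term σ}

theorem interp_eq (h : Denotes M σ v t) : t.interp M = v := by
  induction h with
  | mk hc _ ih => simp only [Term.interp, ih]; exact hc.1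

theorem size_eq (h : Denotes M σ v t) : (t.size : ℤ) = M.sizeF σ v := by
  induction h with
  | mk hc _ ih => rw [Term.size, hc.2.2.2]; push_cast; simp only [ih]

theorem head_eq (h : Denotes M σ v t) {f : Fin S.numCtors}
    {c : Fin (S.ctorArgs f).length → ℤ} (hf : S.ctorRes f = σ) (hc : CtorSpec' M f v c) :
    t.head = f := by
  cases h with
  | mk hc' _ => exact (hc.ctor_eq hf hc').symm

theorem eq_mk {f : Fin S.numCtors} {c : Fin (S.ctorArgs f).length → ℤ}
    {t : S.Term (S.ctorRes f)} (h : Denotes M (S.ctorRes f) v t) (hc : CtorSpec' M f v c) :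
    ∃ args, (∀ k, Denotes M _ (c k) (args k)) ∧ t = .mk f args := by
  suffices ∀ σ (t : S.Term σ) (hf : S.ctorRes f = σ), Denotes M σ v t →
      ∃ args, (∀ k, Denotes M _ (c k) (args k)) ∧ t = hf ▸ .mk f args from this _ t rfl h
  rintro σ t hf ⟨hc', hargs⟩
  obtain rfl := hc.ctor_eq hf hc'
  obtain rfl := hc.args_eq hc'
  exact ⟨_, hargs, rfl⟩

theorem unique (h : Denotes M σ v t) (h' : Denotes M σ v t') : t = t' := by
  induction h with
  | mk hc _ ih =>
    obtain ⟨args', hargs', rfl⟩ := h'.eq_mk hc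
    exact congrArg _ (funext fun k => ih k (hargs' k))

end Denotes

def IsSpecClosed (M : RModel S) (Cov : (σ : Fin S.numSorts) → Set ℤ) : Prop :=
  ∀ σ, ∀ v ∈ Cov σ, ∃ f, ∃ _ : S.ctorRes f = σ, ∃ c,
    CtorSpec' M f v c ∧ ∀ k, c k ∈ Cov ((S.ctorArgs f).get k)

theorem IsSpecClosed.exists_denotes {M : RModel S} {Cov : (σ : Fin S.numSorts) → Set ℤ}
    (hCov : IsSpecClosed M Cov) {σ : Fin S.numSorts} {v : ℤ} (hv : v ∈ Cov σ) :
    ∃ t, Denotes M σ v t := by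
  induction hn : (M.sizeF σ v).toNat using Nat.strong_induction_on generalizing σ v with
  | _ n ih =>
  obtain ⟨f, rfl, c, hc, hcov⟩ := hCov σ v hv
  choose args hargs using fun k => ih _ (hn ▸ hc.toNat_sizeF_arg_lt k) (hcov k) rfl
  exact ⟨_, .mk hc hargs⟩

theorem Term.mk_injective (f : Fin S.numCtors) :
    Function.Injective (Term.mk (S := S) f) :=
  fun _ _ h => Term.mk.inj h

section Reify

variable (hS : S.WellDefined) (M : RModel S)

/-- The term denoted by `v`, if there is one (an arbitrary term of sort `σ` otherwise). -/
noncomputable def reify (σ : Fin S.numSorts) (v : ℤ) : S.Term σ :=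
  @Classical.epsilon _ (hS σ) (Denotes M σ v)

open scoped Classical in
noncomputable def reifySel : SelInterp S where
  sel f j t :=
    if h : ∃ args, Term.mk f args = t then h.choose j
    else reify hS M _ (M.selF f j (t.interp M))
  sel_mk f j args := by
    have h : ∃ args', Term.mk f args' = Term.mk f args := ⟨args, rfl⟩
    rw [dif_pos h, Term.mk_injective f h.choose_spec]

variable {hS M}

theorem IsSpecClosed.denotes_reify {Cov : (σ : Fin S.numSorts) → Set ℤ}
    (hCov : IsSpecClosed M Cov) {σ : Fin S.numSorts} {v : ℤ} (hv : v ∈ Cov σ) :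
    Denotes M σ v (reify hS M σ v) :=
  @Classical.epsilon_spec _ (Denotes M σ v) (hCov.exists_denotes hv)

theorem reifySel_sel_of_head_ne {f : Fin S.numCtors} (j : Fin (S.ctorArgs f).length)
    {t : S.Term (S.ctorRes f)} (hne : t.head ≠ f) :
    (reifySel hS M).sel f j t = reify hS M _ (M.selF f j (t.interp M)) := by
  classical
  refine dif_neg ?_
  rintro ⟨args, rfl⟩
  exact hne rfl

end Reify

section Transfer

variable {V : Fin S.numSorts → Type} {hS : S.WellDefined} {M : RModel S}
  {β : (σ : Fin S.numSorts) → V σ → ℤ}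

theorem Lit.holds_reify_of_redHolds {l : Lit S V}
    (hden : ∀ σ (x : V σ), ⟨σ, x⟩ ∈ l.varList → Denotes M σ (β σ x) (reify hS M σ (β σ x)))
    (hl : l.redHolds M β) :
    l.holds (reifySel hS M) fun σ x => reify hS M σ (β σ x) := by
  cases l with
  | ctorEq f xs x0 =>
    exact (Denotes.mk hl fun k => hden _ (xs k) (.tail _ (List.mem_ofFn.2 ⟨k, rfl⟩))).unique
      (hden _ x0 (by simp [Lit.varList]))
  | selEq f j x y =>
    obtain ⟨hsel, g, hg, cs, -, hcs⟩ := hl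
    have hx := hden _ x (by simp [Lit.varList])
    have hy := hden _ y (by simp [Lit.varList])
    show (reifySel hS M).sel f j (reify hS M _ (β _ x)) = reify hS M _ (β _ y)
    by_cases hgf : g = f
    · subst hgf
      obtain ⟨args, hargs, heq⟩ := hx.eq_mk hcs
      rw [heq, (reifySel hS M).sel_mk]
      exact (hargs j).unique (by rwa [(hcs.2.2.1 j).1.symm.trans hsel])
    · rw [reifySel_sel_of_head_ne j (by rw [hx.head_eq hg hcs]; exact hgf), hx.interp_eq, hsel]
  | tst f x =>
    obtain ⟨cs, -, hcs⟩ := hl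
    exact (hden _ x (by simp [Lit.varList])).head_eq rfl hcs
  | ntst f x =>
    obtain ⟨g, hg, hgf, cs, -, hcs⟩ := hl
    show Term.head _ ≠ f
    rw [(hden _ x (by simp [Lit.varList])).head_eq hg hcs]
    exact hgf
  | eqv x y => exact congrArg _ hl
  | nev x y =>
    intro h
    apply hl
    rw [← (hden _ x (by simp [Lit.varList])).interp_eq,
      ← (hden _ y (by simp [Lit.varList])).interp_eq]
    exact congrArg _ h
  | sizeC xs P =>
    have hsize : ∀ k, ((reify hS M (xs k).1 (β (xs k).1 (xs k).2)).size : ℤ) =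
        M.sizeF (xs k).1 (β (xs k).1 (xs k).2) :=
      fun k => (hden _ _ (List.mem_ofFn.2 ⟨k, rfl⟩)).size_eq
    show P.eval _
    simpa only [hsize] using hl.1

theorem Formula.holds_reify_of_redHolds {χ : Formula S V}
    (hden : ∀ σ (x : V σ), ⟨σ, x⟩ ∈ χ.varList → Denotes M σ (β σ x) (reify hS M σ (β σ x)))
    (hχ : χ.redHolds M β) :
    χ.holds (reifySel hS M) fun σ x => reify hS M σ (β σ x) := by
  induction χ with
  | fls => exact hχ
  | lit l => exact Lit.holds_reify_of_redHolds hden hχ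
  | and φ ψ ihφ ihψ =>
    exact ⟨ihφ (fun σ x hx => hden σ x (List.mem_append_left _ hx)) hχ.1,
      ihψ (fun σ x hx => hden σ x (List.mem_append_right _ hx)) hχ.2⟩
  | or φ ψ ihφ ihψ =>
    exact hχ.imp (ihφ fun σ x hx => hden σ x (List.mem_append_left _ hx))
      (ihψ fun σ x hx => hden σ x (List.mem_append_right _ hx))

end Transfer

section Unfolding

variable {V : Fin S.numSorts → Type} {M : RModel S} {β : (σ : Fin S.numSorts) → V σ → ℤ}

theorem Formula.adtSat_of_redHolds (hS : S.WellDefined) {Cov : (σ : Fin S.numSorts) → Set ℤ}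
    (hCov : IsSpecClosed M Cov) {χ : Formula S V}
    (hvars : ∀ σ (x : V σ), ⟨σ, x⟩ ∈ χ.varList → β σ x ∈ Cov σ) (hχ : χ.redHolds M β) :
    χ.ADTSat :=
  ⟨reifySel hS M, _,
    Formula.holds_reify_of_redHolds (fun σ x hx => hCov.denotes_reify (hvars σ x hx)) hχ⟩

theorem Formula.varList_foldr_or (l : List (Formula S V)) :
    (l.foldr Formula.or Formula.fls).varList = l.flatMap Formula.varList := by
  induction l with
  | nil => rfl
  | cons χ l ih => simp only [List.foldr_cons, Formula.varList, ih, List.flatMap_cons]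

theorem Formula.redHolds_foldr_or (l : List (Formula S V)) :
    (l.foldr Formula.or Formula.fls).redHolds M β ↔ ∃ χ ∈ l, χ.redHolds M β := by
  induction l with
  | nil => simp [Formula.redHolds]
  | cons χ l ih => simp [Formula.redHolds, ih]

theorem exists_ctorSpec'_of_redHolds_unfoldDisj {σ : Fin S.numSorts} {x : V σ}
    {fresh : (f : Fin S.numCtors) → (i : Fin (S.ctorArgs f).length) → V ((S.ctorArgs f).get i)}
    (h : (unfoldDisj σ x fresh).redHolds M β) :
    ∃ f, ∃ _ : S.ctorRes f = σ, CtorSpec' M f (β σ x) (fun k => β _ (fresh f k)) ∧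
      ∀ k, ⟨_, fresh f k⟩ ∈ (unfoldDisj σ x fresh).varList := by
  rw [unfoldDisj, Formula.redHolds_foldr_or] at h
  obtain ⟨_, hmem, hχ⟩ := h
  obtain ⟨f, -, rfl⟩ := List.mem_map.1 hmem
  by_cases hf : S.ctorRes f = σ
  · subst hf
    rw [dif_pos rfl] at hmem
    refine ⟨f, rfl, by simpa [Formula.redHolds, Lit.redHolds] using hχ, fun k => ?_⟩
    rw [unfoldDisj, Formula.varList_foldr_or, List.mem_flatMap]
    exact ⟨_, hmem, .tail _ (List.mem_ofFn.2 ⟨k, rfl⟩)⟩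
  · simp [hf, Formula.redHolds] at hχ

namespace IsUnfoldStepAt

variable {φ φ' : Formula S V} {u : Σ σ, V σ}

theorem varList_subset (h : IsUnfoldStepAt φ φ' u) : φ.varList ⊆ φ'.varList := by
  obtain ⟨fresh, -, -, -, rfl⟩ := h
  exact List.subset_append_left _ _

theorem redHolds_of_redHolds (h : IsUnfoldStepAt φ φ' u) (h' : φ'.redHolds M β) :
    φ.redHolds M β := by
  obtain ⟨fresh, -, -, -, rfl⟩ := h
  exact h'.1

theorem exists_ctorSpec' (h : IsUnfoldStepAt φ φ' u) (h' : φ'.redHolds M β) :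
    ∃ f, ∃ _ : S.ctorRes f = u.1,
      ∃ xs : (k : Fin (S.ctorArgs f).length) → V ((S.ctorArgs f).get k),
        CtorSpec' M f (β u.1 u.2) (fun k => β _ (xs k)) ∧ ∀ k, ⟨_, xs k⟩ ∈ φ'.varList := by
  obtain ⟨fresh, -, -, -, rfl⟩ := h
  obtain ⟨f, hf, hc, hmem⟩ := exists_ctorSpec'_of_redHolds_unfoldDisj h'.2
  exact ⟨f, hf, fresh f, hc, fun k => List.mem_append_right _ (hmem k)⟩

end IsUnfoldStepAt

end Unfolding

end ADTSig

open ADTSig in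
theorem unfolding_complete_general (S : ADTSig) (hS : S.WellDefined)
    (V : Fin S.numSorts → Type) (φ : Formula S V)
    (ψ : ℕ → Formula S V) (us : ℕ → Σ σ, V σ)
    (h0 : ψ 0 = φ)
    (hstep : ∀ i, IsUnfoldStepAt (ψ i) (ψ (i + 1)) (us i))
    (i : ℕ) (M : RModel S) (β : (σ : Fin S.numSorts) → V σ → ℤ)
    (hsat : (ψ i).redHolds M β)
    (hcover : ∀ σ (x : V σ), (⟨σ, x⟩ : Σ σ, V σ) ∈ (ψ i).varList →
       ∃ j < i, (us j).1 = σ ∧ β (us j).1 (us j).2 = β σ x) :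
    φ.ADTSat := by
  have hred : ∀ j ≤ i, (ψ j).redHolds M β := fun j hj =>
    antitone_nat_of_succ_le (f := fun j => (ψ j).redHolds M β)
      (fun j => (hstep j).redHolds_of_redHolds) hj hsat
  have hvars : ∀ j ≤ i, (ψ j).varList ⊆ (ψ i).varList := fun j hj =>
    monotone_nat_of_le_succ (f := fun j => {p | p ∈ (ψ j).varList})
      (fun j _ hp => (hstep j).varList_subset hp) hj
  have hclosed :
      IsSpecClosed M fun σ => {v | ∃ j < i, (us j).1 = σ ∧ β (us j).1 (us j).2 = v} := by
    rintro σ v ⟨j, hj, rfl, rfl⟩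
    obtain ⟨f, hf, xs, hc, hmem⟩ := (hstep j).exists_ctorSpec' (hred (j + 1) hj)
    exact ⟨f, hf, _, hc, fun k => hcover _ _ (hvars (j + 1) hj (hmem k))⟩
  subst h0
  exact Formula.adtSat_of_redHolds hS hclosed
    (fun σ x hx => hcover σ x (hvars 0 (Nat.zero_le i) hx)) (hred 0 (Nat.zero_le i))

open ADTSig in
/-- **Lemma 2 (2).** For any unfolding sequence `φ₀, φ₁, …` of a flat ADT
formula `φ` in NNF with size constraints, with `Uᵢ = {us j | j < i}` the set of
variables unfolded in `φᵢ`: if the reduct `φ̃ᵢ` is satisfied over EUF+LIA by a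
model `M` and assignment `β` such that every ADT variable of `φᵢ` takes the
same value as some already-unfolded variable of the same sort, then `φ` is
satisfiable over the ADT with size. -/
theorem unfolding_complete (S : ADTSig) (hS : S.WellDefined)
    (V : Fin S.numSorts → Type) (φ : Formula S V)
    (ψ : ℕ → Formula S V) (us : ℕ → Σ σ, V σ)
    (h0 : ψ 0 = φ)
    (hstep : ∀ i, IsUnfoldStepAt (ψ i) (ψ (i + 1)) (us i))
    (i : ℕ) (M : RModel S) (β : (σ : Fin S.numSorts) → V σ → ℤ)
    (hsat : (ψ i).redHolds M β)
    (hIn : ∀ σ (x : V σ), InSort S σ (β σ x))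
    (hcover : ∀ σ (x : V σ), (⟨σ, x⟩ : Σ σ, V σ) ∈ (ψ i).varList →
       ∃ j < i, (us j).1 = σ ∧ β (us j).1 (us j).2 = β σ x) :
    φ.ADTSat :=
  unfolding_complete_general S hS V φ ψ us h0 hstep i M β hsat hcover
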